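/- Let Φ : M_{d_A} → M_{d_B} and Ψ : M_{d_A} → M_{d_C} be complementary completely positive maps (arising from a common Stinespring operator L : ℂ^{d_A} → ℂ^{d_B} ⊗ ℂ^{d_C} via Φ(X) = Tr_C(LXL†) and Ψ(X) = Tr_B(LXL†)). If the Choi matrix J(Φ) has positive partial transpose, then rank(J(Ψ)) ≤ max{rank(Tr_A J(Ψ)), rank(Tr_C J(Ψ))}. -/

import Mathlib

open Matrix Kronecker BigOperators ComplexOrder

noncomputable section

/-- Partial trace over the first tensor factor. -/
def trFst {m p : Type*} [Fintype m] (X : Matrix (m × p) (m × p) ℂ) : Matrix p p ℂ :=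
  fun i j => ∑ a, X (a, i) (a, j)

/-- Partial trace over the second tensor factor. -/
def trSnd {m p : Type*} [Fintype p] (X : Matrix (m × p) (m × p) ℂ) : Matrix m m ℂ :=
  fun i j => ∑ b, X (i, b) (j, b)

/-- Partial transpose on the second tensor factor. -/
def ptSnd {m p : Type*} (X : Matrix (m × p) (m × p) ℂ) : Matrix (m × p) (m × p) ℂ :=
  fun q r => X (q.1, r.2) (r.1, q.2)

/-- A bipartite matrix is separable if it is a finite sum of Kronecker products of
positive semidefinite matrices (equivalently, lies in the convex hull of such products). -/
def Separable {m p : Type*} [Fintype m] [Fintype p] (X : Matrix (m × p) (m × p) ℂ) : Prop :=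
  ∃ (k : ℕ) (Y : Fin k → Matrix m m ℂ) (Z : Fin k → Matrix p p ℂ),
    (∀ i, (Y i).PosSemidef) ∧ (∀ i, (Z i).PosSemidef) ∧ X = ∑ i, (Y i) ⊗ₖ (Z i)

/-- The amplification `id_m ⊗ Φ` of a map `Φ`, acting blockwise. -/
def amp {dA dB : ℕ} {m : Type*}
    (Φ : Matrix (Fin dA) (Fin dA) ℂ →ₗ[ℂ] Matrix (Fin dB) (Fin dB) ℂ)
    (X : Matrix (m × Fin dA) (m × Fin dA) ℂ) : Matrix (m × Fin dB) (m × Fin dB) ℂ :=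
  fun q r => Φ (fun a a' => X (q.1, a) (r.1, a')) q.2 r.2

/-- The amplification `ϑ_m ⊗ Φ` of a map `Φ` (transpose on the first factor). -/
def ampT {dA dB : ℕ} {m : Type*}
    (Φ : Matrix (Fin dA) (Fin dA) ℂ →ₗ[ℂ] Matrix (Fin dB) (Fin dB) ℂ)
    (X : Matrix (m × Fin dA) (m × Fin dA) ℂ) : Matrix (m × Fin dB) (m × Fin dB) ℂ :=
  fun q r => Φ (fun a a' => X (r.1, a) (q.1, a')) q.2 r.2

/-- Complete positivity. -/
def IsCP {dA dB : ℕ} (Φ : Matrix (Fin dA) (Fin dA) ℂ →ₗ[ℂ] Matrix (Fin dB) (Fin dB) ℂ) : Prop :=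
  ∀ (n : ℕ) (X : Matrix (Fin n × Fin dA) (Fin n × Fin dA) ℂ),
    X.PosSemidef → (amp Φ X).PosSemidef

/-- Complete copositivity. -/
def IsCoCP {dA dB : ℕ} (Φ : Matrix (Fin dA) (Fin dA) ℂ →ₗ[ℂ] Matrix (Fin dB) (Fin dB) ℂ) : Prop :=
  ∀ (n : ℕ) (X : Matrix (Fin n × Fin dA) (Fin n × Fin dA) ℂ),
    X.PosSemidef → (ampT Φ X).PosSemidef

/-- A map is PPT if it is completely positive and completely copositive. -/
def IsPPT {dA dB : ℕ} (Φ : Matrix (Fin dA) (Fin dA) ℂ →ₗ[ℂ] Matrix (Fin dB) (Fin dB) ℂ) : Prop :=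
  IsCP Φ ∧ IsCoCP Φ

/-- Entanglement breaking maps. -/
def IsEB {dA dB : ℕ} (Φ : Matrix (Fin dA) (Fin dA) ℂ →ₗ[ℂ] Matrix (Fin dB) (Fin dB) ℂ) : Prop :=
  ∀ (n : ℕ) (X : Matrix (Fin n × Fin dA) (Fin n × Fin dA) ℂ),
    X.PosSemidef → Separable (amp Φ X)

/-- The Choi matrix of a linear map. -/
def Choi {dA dB : ℕ} (Φ : Matrix (Fin dA) (Fin dA) ℂ →ₗ[ℂ] Matrix (Fin dB) (Fin dB) ℂ) :
    Matrix (Fin dA × Fin dB) (Fin dA × Fin dB) ℂ :=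
  ∑ i, ∑ j, (Matrix.single i j (1 : ℂ)) ⊗ₖ Φ (Matrix.single i j (1 : ℂ))

/-!
If `L` is a Stinespring operator, both Choi matrices are Gram matrices of one reshuffling `M`
of `L`: `J(Ψ) = M Mᴴ` and `Tr_A J(Φ) = (Mᴴ M)ᵀ`, so `rank J(Ψ) = rank Tr_A J(Φ)`; exchanging
`B` and `C`, `rank J(Φ) = rank Tr_A J(Ψ)`. It remains to show `rank Tr_A ρ ≤ rank ρ` for a
PPT state `ρ`.

Choose `x₀` maximising the rank of `f ↦ ρ (x₀ ⊗ f)` and let `ρ (x₀ ⊗ g) = 0`. Maximality along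
the pencil `x₀ + t x` puts `ρ (x ⊗ g)` into the range of `ρ (x₀ ⊗ ·)`, and by the PPT condition
`ρ (x₀ ⊗ g) = 0` forces `⟨z ⊗ g, ρ (x₀ ⊗ w)⟩ = 0` for all `z`, `w`. Hence
`⟨x ⊗ g, ρ (x ⊗ g)⟩ = 0`, i.e. `ρ (x ⊗ g) = 0` for every `x`, and `g ∈ ker Tr_A ρ`. So
`rank Tr_A ρ ≤ rank ρ (x₀ ⊗ ·) ≤ rank ρ`.
-/

namespace Matrix

variable {𝕜 : Type*} [NontriviallyNormedField 𝕜] [CompleteSpace 𝕜]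
  {m n : Type*} [Fintype m] [Fintype n]

theorem mulVec_mem_range_of_rank_add_smul_le {P Q : Matrix n m 𝕜}
    (hrank : ∀ t : 𝕜, (P + t • Q).rank ≤ P.rank) {f : m → 𝕜} (hf : P *ᵥ f = 0) :
    Q *ᵥ f ∈ LinearMap.range P.mulVecLin := by
  -- Otherwise `Q f` and a basis of `range P` are independent; independence survives small
  -- perturbations, and for `t ≠ 0` these vectors lie in `range (P + t • Q)` as
  -- `(P + t • Q) f = t • Q f`, contradicting maximality of `rank P`.
  by_contra hQf
  obtain ⟨b⟩ : Nonempty (Module.Basis (Fin P.rank) 𝕜 (LinearMap.range P.mulVecLin)) :=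
    ⟨Module.finBasis 𝕜 _⟩
  choose u hu using fun i => (b i).2
  let v : 𝕜 → Option (Fin P.rank) → n → 𝕜 := fun t o =>
    Option.casesOn' o (Q *ᵥ f) fun i => P *ᵥ u i + t • Q *ᵥ u i
  have hv0 : LinearIndependent 𝕜 (v 0) := by
    have hb : LinearIndependent 𝕜 fun i => (b i : n → 𝕜) :=
      b.linearIndependent.map' (LinearMap.range P.mulVecLin).subtype (Submodule.ker_subtype _)
    have hspan : Submodule.span 𝕜 (Set.range fun i => (b i : n → 𝕜)) ≤
        LinearMap.range P.mulVecLin :=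
      Submodule.span_le.mpr (Set.range_subset_iff.mpr fun i => (b i).2)
    have hv : v 0 = fun o => Option.casesOn' o (Q *ᵥ f) fun i => (b i : n → 𝕜) := by
      funext o
      cases o <;> simp [v, ← hu]
    rw [hv]
    exact hb.option fun h => hQf (hspan h)
  have hcont : Continuous v := by
    refine continuous_pi fun o => ?_
    cases o <;> simp only [v, Option.casesOn'] <;> fun_prop
  obtain ⟨t, ht, ht0⟩ : ∃ t, LinearIndependent 𝕜 (v t) ∧ t ≠ 0 :=
    (((hcont.tendsto 0).eventually hv0.eventually).filter_mono
      (nhdsWithin_le_nhds (s := {0}ᶜ)) |>.and self_mem_nhdsWithin).exists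
  have hmem : ∀ o, v t o ∈ LinearMap.range (P + t • Q).mulVecLin := by
    rintro (_ | i)
    · refine ⟨t⁻¹ • f, ?_⟩
      simp [v, hf, ht0]
    · exact ⟨u i, by simp [v]⟩
  have hli : LinearIndependent 𝕜
      fun o => (⟨v t o, hmem o⟩ : LinearMap.range (P + t • Q).mulVecLin) :=
    LinearIndependent.of_comp (LinearMap.range (P + t • Q).mulVecLin).subtype ht
  have hcard := hli.fintype_card_le_finrank
  rw [Fintype.card_option, Fintype.card_fin] at hcard
  exact Nat.not_succ_le_self _ (hcard.trans (hrank t))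

theorem rank_le_rank_of_ker_le {K : Type*} [Field K] {k l : Type*}
    {A : Matrix k n K} {B : Matrix l n K}
    (h : LinearMap.ker A.mulVecLin ≤ LinearMap.ker B.mulVecLin) : B.rank ≤ A.rank := by
  have hA := LinearMap.finrank_range_add_finrank_ker A.mulVecLin
  have hB := LinearMap.finrank_range_add_finrank_ker B.mulVecLin
  have := Submodule.finrank_mono h
  rw [rank, rank]
  omega

end Matrix

section PartialTranspose

variable {α β : Type*} [Fintype α]

def kronVec (x : α → ℂ) (y : β → ℂ) : α × β → ℂ := fun q => x q.1 * y q.2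

def mulKronLeft (ρ : Matrix (α × β) (α × β) ℂ) (x : α → ℂ) : Matrix (α × β) β ℂ :=
  of fun q b => ∑ a, ρ q (a, b) * x a

theorem mulKronLeft_add_smul (ρ : Matrix (α × β) (α × β) ℂ) (x y : α → ℂ) (t : ℂ) :
    mulKronLeft ρ (x + t • y) = mulKronLeft ρ x + t • mulKronLeft ρ y := by
  ext q b
  simp [mulKronLeft, mul_add, Finset.sum_add_distrib, Finset.mul_sum, mul_left_comm]

variable [Fintype β]

theorem mulKronLeft_mulVec (ρ : Matrix (α × β) (α × β) ℂ) (x : α → ℂ) (f : β → ℂ) :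
    mulKronLeft ρ x *ᵥ f = ρ *ᵥ kronVec x f := by
  funext q
  simp only [mulKronLeft, kronVec, mulVec, dotProduct, of_apply, Fintype.sum_prod_type,
    Finset.sum_mul, mul_assoc]
  exact Finset.sum_comm

theorem rank_mulKronLeft_le (ρ : Matrix (α × β) (α × β) ℂ) (x : α → ℂ) :
    (mulKronLeft ρ x).rank ≤ ρ.rank :=
  Submodule.finrank_mono <| by
    rintro _ ⟨f, rfl⟩
    exact ⟨kronVec x f, by simp [mulKronLeft_mulVec]⟩

theorem dotProduct_mulVec_kronVec_eq_ptSnd (ρ : Matrix (α × β) (α × β) ℂ)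
    (x z : α → ℂ) (f y : β → ℂ) :
    star (kronVec z f) ⬝ᵥ (ρ *ᵥ kronVec x y) =
      star (kronVec z (star y)) ⬝ᵥ (ptSnd ρ *ᵥ kronVec x (star f)) := by
  simp only [dotProduct, mulVec, kronVec, ptSnd, Fintype.sum_prod_type, Pi.star_apply,
    star_mul', star_star, Finset.mul_sum]
  refine Finset.sum_congr rfl fun a _ => ?_
  rw [Finset.sum_comm_cycle]
  refine Finset.sum_congr rfl fun c _ => ?_
  rw [Finset.sum_comm]
  refine Finset.sum_congr rfl fun b _ => Finset.sum_congr rfl fun a' _ => ?_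
  ring

theorem dotProduct_mulVec_kronVec_eq_zero_of_posSemidef_ptSnd {ρ : Matrix (α × β) (α × β) ℂ}
    (hσ : (ptSnd ρ).PosSemidef) {x : α → ℂ} {f : β → ℂ} (h : ρ *ᵥ kronVec x f = 0)
    (z : α → ℂ) (y : β → ℂ) : star (kronVec z f) ⬝ᵥ (ρ *ᵥ kronVec x y) = 0 := by
  have hσf : ptSnd ρ *ᵥ kronVec x (star f) = 0 := by
    rw [← hσ.dotProduct_mulVec_zero_iff, ← dotProduct_mulVec_kronVec_eq_ptSnd, h, dotProduct_zero]
  rw [dotProduct_mulVec_kronVec_eq_ptSnd, hσf, dotProduct_zero]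

theorem trFst_mulVec_eq_zero {ρ : Matrix (α × β) (α × β) ℂ} {g : β → ℂ}
    (h : ∀ x : α → ℂ, ρ *ᵥ kronVec x g = 0) : trFst ρ *ᵥ g = 0 := by
  classical
  funext b
  have hdiag : ∀ a, (ρ *ᵥ kronVec (Pi.single a 1) g) (a, b) =
      ∑ b', ρ (a, b) (a, b') * g b' := by
    intro a
    simp [mulVec, dotProduct, kronVec, Fintype.sum_prod_type, Pi.single_apply]
  simp only [mulVec, dotProduct, trFst, Finset.sum_mul]
  rw [Finset.sum_comm]
  simp [← hdiag, h]

theorem mulVec_kronVec_eq_zero_of_rank_le {ρ : Matrix (α × β) (α × β) ℂ} (hρ : ρ.PosSemidef)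
    (hσ : (ptSnd ρ).PosSemidef) {x₀ : α → ℂ}
    (hx₀ : ∀ x, (mulKronLeft ρ x).rank ≤ (mulKronLeft ρ x₀).rank) {g : β → ℂ}
    (hg : ρ *ᵥ kronVec x₀ g = 0) (x : α → ℂ) : ρ *ᵥ kronVec x g = 0 := by
  obtain ⟨w, hw⟩ : ρ *ᵥ kronVec x g ∈ LinearMap.range (mulKronLeft ρ x₀).mulVecLin := by
    rw [← mulKronLeft_mulVec]
    refine mulVec_mem_range_of_rank_add_smul_le (fun t => ?_) (by rwa [mulKronLeft_mulVec])
    rw [← mulKronLeft_add_smul]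
    exact hx₀ _
  rw [mulVecLin_apply, mulKronLeft_mulVec] at hw
  rw [← hρ.dotProduct_mulVec_zero_iff, ← hw]
  exact dotProduct_mulVec_kronVec_eq_zero_of_posSemidef_ptSnd hσ hg x w

theorem rank_trFst_le_rank_of_posSemidef_ptSnd {ρ : Matrix (α × β) (α × β) ℂ}
    (hρ : ρ.PosSemidef) (hσ : (ptSnd ρ).PosSemidef) : (trFst ρ).rank ≤ ρ.rank := by
  obtain ⟨x₀, hx₀⟩ : ∃ x₀, ∀ x, (mulKronLeft ρ x).rank ≤ (mulKronLeft ρ x₀).rank := by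
    have hbdd : BddAbove (Set.range fun x => (mulKronLeft ρ x).rank) :=
      ⟨Fintype.card β, by rintro _ ⟨x, rfl⟩; exact rank_le_card_width _⟩
    obtain ⟨x₀, hx₀⟩ := Nat.sSup_mem (Set.range_nonempty _) hbdd
    exact ⟨x₀, fun x => (le_csSup hbdd ⟨x, rfl⟩).trans_eq hx₀.symm⟩
  calc (trFst ρ).rank ≤ (mulKronLeft ρ x₀).rank := by
        refine rank_le_rank_of_ker_le fun g hg => trFst_mulVec_eq_zero fun x => ?_
        refine mulVec_kronVec_eq_zero_of_rank_le hρ hσ hx₀ ?_ x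
        rwa [LinearMap.mem_ker, mulVecLin_apply, mulKronLeft_mulVec] at hg
    _ ≤ ρ.rank := rank_mulKronLeft_le ρ x₀

end PartialTranspose

section Stinespring

variable {dA dB dC : ℕ}

theorem trSnd_conj_eq_trFst_conj_swap (L : Matrix (Fin dB × Fin dC) (Fin dA) ℂ)
    (X : Matrix (Fin dA) (Fin dA) ℂ) :
    trSnd (L * X * Lᴴ) = trFst (L.submatrix Prod.swap id * X * (L.submatrix Prod.swap id)ᴴ) :=
  rfl

theorem trFst_conj_eq_trSnd_conj_swap (L : Matrix (Fin dB × Fin dC) (Fin dA) ℂ)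
    (X : Matrix (Fin dA) (Fin dA) ℂ) :
    trFst (L * X * Lᴴ) = trSnd (L.submatrix Prod.swap id * X * (L.submatrix Prod.swap id)ᴴ) :=
  rfl

theorem choi_apply {d e : ℕ} (Θ : Matrix (Fin d) (Fin d) ℂ →ₗ[ℂ] Matrix (Fin e) (Fin e) ℂ)
    (i j : Fin d) (b b' : Fin e) : Choi Θ (i, b) (j, b') = Θ (single i j (1 : ℂ)) b b' := by
  simp [Choi, Matrix.sum_apply, single_apply, ite_and]

theorem mul_single_mul_conjTranspose_apply (L : Matrix (Fin dB × Fin dC) (Fin dA) ℂ) (i j : Fin dA)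
    (p q : Fin dB × Fin dC) : (L * single i j (1 : ℂ) * Lᴴ) p q = L p i * star (L q j) := by
  simp [mul_apply, single_apply, ite_and]

def choiFactor {α β γ : Type*} (L : Matrix (β × γ) α ℂ) : Matrix (α × γ) β ℂ :=
  of fun p b => L (b, p.2) p.1

theorem choi_eq_choiFactor_mul_conjTranspose {L : Matrix (Fin dB × Fin dC) (Fin dA) ℂ}
    {Ψ : Matrix (Fin dA) (Fin dA) ℂ →ₗ[ℂ] Matrix (Fin dC) (Fin dC) ℂ}
    (hΨ : ∀ X, Ψ X = trFst (L * X * Lᴴ)) : Choi Ψ = choiFactor L * (choiFactor L)ᴴ := by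
  ext ⟨i, c⟩ ⟨j, c'⟩
  simp only [choi_apply, hΨ, trFst, mul_single_mul_conjTranspose_apply]
  simp [choiFactor, mul_apply]

theorem trFst_choi_eq {L : Matrix (Fin dB × Fin dC) (Fin dA) ℂ}
    {Φ : Matrix (Fin dA) (Fin dA) ℂ →ₗ[ℂ] Matrix (Fin dB) (Fin dB) ℂ}
    (hΦ : ∀ X, Φ X = trSnd (L * X * Lᴴ)) :
    trFst (Choi Φ) = ((choiFactor L)ᴴ * choiFactor L)ᵀ := by
  ext b b'
  simp only [trFst, choi_apply, hΦ, trSnd, mul_single_mul_conjTranspose_apply]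
  simp [choiFactor, mul_apply, Fintype.sum_prod_type, mul_comm]

theorem posSemidef_choi {L : Matrix (Fin dB × Fin dC) (Fin dA) ℂ}
    {Ψ : Matrix (Fin dA) (Fin dA) ℂ →ₗ[ℂ] Matrix (Fin dC) (Fin dC) ℂ}
    (hΨ : ∀ X, Ψ X = trFst (L * X * Lᴴ)) : (Choi Ψ).PosSemidef := by
  rw [choi_eq_choiFactor_mul_conjTranspose hΨ]
  exact posSemidef_self_mul_conjTranspose _

theorem rank_choi_eq_rank_trFst_choi {L : Matrix (Fin dB × Fin dC) (Fin dA) ℂ}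
    {Φ : Matrix (Fin dA) (Fin dA) ℂ →ₗ[ℂ] Matrix (Fin dB) (Fin dB) ℂ}
    {Ψ : Matrix (Fin dA) (Fin dA) ℂ →ₗ[ℂ] Matrix (Fin dC) (Fin dC) ℂ}
    (hΦ : ∀ X, Φ X = trSnd (L * X * Lᴴ)) (hΨ : ∀ X, Ψ X = trFst (L * X * Lᴴ)) :
    (Choi Ψ).rank = (trFst (Choi Φ)).rank := by
  rw [choi_eq_choiFactor_mul_conjTranspose hΨ, trFst_choi_eq hΦ, rank_transpose,
    rank_self_mul_conjTranspose, rank_conjTranspose_mul_self]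

end Stinespring

theorem stmt6 {dA dB dC : ℕ} (L : Matrix (Fin dB × Fin dC) (Fin dA) ℂ)
    (Φ : Matrix (Fin dA) (Fin dA) ℂ →ₗ[ℂ] Matrix (Fin dB) (Fin dB) ℂ)
    (Ψ : Matrix (Fin dA) (Fin dA) ℂ →ₗ[ℂ] Matrix (Fin dC) (Fin dC) ℂ)
    (hΦ : ∀ X, Φ X = trSnd (L * X * Lᴴ))
    (hΨ : ∀ X, Ψ X = trFst (L * X * Lᴴ))
    (hPPT : (ptSnd (Choi Φ)).PosSemidef) :
    (Choi Ψ).rank ≤ max (trFst (Choi Ψ)).rank (trSnd (Choi Ψ)).rank := by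
  have hΦ' : ∀ X, Φ X = trFst (L.submatrix Prod.swap id * X * (L.submatrix Prod.swap id)ᴴ) :=
    fun X => (hΦ X).trans (trSnd_conj_eq_trFst_conj_swap L X)
  have hΨ' : ∀ X, Ψ X = trSnd (L.submatrix Prod.swap id * X * (L.submatrix Prod.swap id)ᴴ) :=
    fun X => (hΨ X).trans (trFst_conj_eq_trSnd_conj_swap L X)
  calc (Choi Ψ).rank = (trFst (Choi Φ)).rank := rank_choi_eq_rank_trFst_choi hΦ hΨ
    _ ≤ (Choi Φ).rank := rank_trFst_le_rank_of_posSemidef_ptSnd (posSemidef_choi hΦ') hPPT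
    _ = (trFst (Choi Ψ)).rank := rank_choi_eq_rank_trFst_choi hΨ' hΦ'
    _ ≤ max (trFst (Choi Ψ)).rank (trSnd (Choi Ψ)).rank := le_max_left _ _
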